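/- arXiv:2603.06447 — 9 statements merged into one kernel-verified Lean document; each statement's English description precedes it below -/
import Mathlib

section
/- If D is a point in the plane of a nondegenerate triangle ABC, distinct from A, B, C, and we set a₁ = cos ∠BDC, a₂ = cos ∠ADC, a₃ = cos ∠ADB, then 1 + 2a₁a₂a₃ - a₁² - a₂² - a₃² = 0. -/
open EuclideanGeometry Real RealInnerProductSpace

theorem snellius_pothenot_pillowcase
    (A B C D : EuclideanSpace ℝ (Fin 2))
    (hABC : ¬ Collinear ℝ ({A, B, C} : Set (EuclideanSpace ℝ (Fin 2))))
    (hDA : D ≠ A) (hDB : D ≠ B) (hDC : D ≠ C) :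
    1 + 2 * Real.cos (∠ B D C) * Real.cos (∠ A D C) * Real.cos (∠ A D B)
      - Real.cos (∠ B D C) ^ 2 - Real.cos (∠ A D C) ^ 2 - Real.cos (∠ A D B) ^ 2 = 0 := by
  set x := A -ᵥ D with hxdef
  set y := B -ᵥ D with hydef
  set z := C -ᵥ D with hzdef
  have hx : x ≠ 0 := fun h => hDA (vsub_eq_zero_iff_eq.mp h).symm
  have hy : y ≠ 0 := fun h => hDB (vsub_eq_zero_iff_eq.mp h).symm
  have hz : z ≠ 0 := fun h => hDC (vsub_eq_zero_iff_eq.mp h).symm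
  have hnx : ‖x‖ ≠ 0 := norm_ne_zero_iff.mpr hx
  have hny : ‖y‖ ≠ 0 := norm_ne_zero_iff.mpr hy
  have hnz : ‖z‖ ≠ 0 := norm_ne_zero_iff.mpr hz
  have h1 : Real.cos (∠ B D C) = (inner ℝ y z : ℝ) / (‖y‖ * ‖z‖) :=
    InnerProductGeometry.cos_angle y z
  have h2 : Real.cos (∠ A D C) = (inner ℝ x z : ℝ) / (‖x‖ * ‖z‖) :=
    InnerProductGeometry.cos_angle x z
  have h3 : Real.cos (∠ A D B) = (inner ℝ x y : ℝ) / (‖x‖ * ‖y‖) :=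
    InnerProductGeometry.cos_angle x y
  have hgram : (inner ℝ x x : ℝ)*(inner ℝ y y : ℝ)*(inner ℝ z z : ℝ) + 2*(inner ℝ x y : ℝ)*(inner ℝ x z : ℝ)*(inner ℝ y z : ℝ)
      - (inner ℝ x x : ℝ)*(inner ℝ y z : ℝ)^2 - (inner ℝ y y : ℝ)*(inner ℝ x z : ℝ)^2 - (inner ℝ z z : ℝ)*(inner ℝ x y : ℝ)^2 = 0 := by
    simp only [EuclideanSpace.inner_eq_star_dotProduct]
    simp [dotProduct, Fin.sum_univ_two]
    ring
  have hxx : (inner ℝ x x : ℝ) = ‖x‖ ^ 2 := real_inner_self_eq_norm_sq x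
  have hyy : (inner ℝ y y : ℝ) = ‖y‖ ^ 2 := real_inner_self_eq_norm_sq y
  have hzz : (inner ℝ z z : ℝ) = ‖z‖ ^ 2 := real_inner_self_eq_norm_sq z
  rw [h1, h2, h3]
  rw [hxx, hyy, hzz] at hgram
  set p := (inner ℝ x y : ℝ) with hp
  set q := (inner ℝ x z : ℝ) with hq
  set r := (inner ℝ y z : ℝ) with hr
  set nx := ‖x‖ with hnxd
  set ny := ‖y‖ with hnyd
  set nz := ‖z‖ with hnzd
  have key : (1:ℝ) + 2 * (r / (ny * nz)) * (q / (nx * nz)) * (p / (nx * ny))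
      - (r / (ny * nz)) ^ 2 - (q / (nx * nz)) ^ 2 - (p / (nx * ny)) ^ 2
      = (nx ^ 2 * ny ^ 2 * nz ^ 2 + 2 * p * q * r - nx ^ 2 * r ^ 2 - ny ^ 2 * q ^ 2
          - nz ^ 2 * p ^ 2) / (nx ^ 2 * ny ^ 2 * nz ^ 2) := by
    field_simp
  rw [key, hgram, zero_div]
end

section
/- For any point D in three-dimensional Euclidean space and any points A, B, C, with D distinct from A, B, C, setting a₁ = cos ∠BDC, a₂ = cos ∠ADC, a₃ = cos ∠ADB, we have 1 + 2a₁a₂a₃ - a₁² - a₂² - a₃² ≥ 0. -/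
open EuclideanGeometry Real

lemma gram_nonneg {E : Type*} [NormedAddCommGroup E] [InnerProductSpace ℝ E]
    (u v w : E) (hu : ‖u‖ = 1) (hv : ‖v‖ = 1) (hw : ‖w‖ = 1) :
    0 ≤ 1 + 2 * (inner ℝ v w : ℝ) * (inner ℝ u w : ℝ) * (inner ℝ u v : ℝ)
      - (inner ℝ v w : ℝ) ^ 2 - (inner ℝ u w : ℝ) ^ 2 - (inner ℝ u v : ℝ) ^ 2 := by
  set p : ℝ := inner ℝ u v with hp
  set q : ℝ := inner ℝ u w with hq
  set r : ℝ := inner ℝ v w with hr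
  have hvu2 : (inner ℝ v u : ℝ) = p := by rw [hp, real_inner_comm]
  have hwu2 : (inner ℝ w u : ℝ) = q := by rw [hq, real_inner_comm]
  have hwv2 : (inner ℝ w v : ℝ) = r := by rw [hr, real_inner_comm]
  by_cases h : p ^ 2 = 1
  · have hvu : v = p • u := by
      have h2 : ‖v - p • u‖ ^ 2 = 0 := by
        rw [norm_sub_sq_real, real_inner_smul_right, hvu2, norm_smul, hu, hv]
        simp only [Real.norm_eq_abs, mul_one, one_pow, mul_pow, sq_abs]
        linarith [h]
      have h3 := norm_eq_zero.mp (pow_eq_zero_iff (n := 2) (by norm_num) |>.mp h2)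
      exact sub_eq_zero.mp h3
    have hrq : r = p * q := by
      rw [hr, hvu, real_inner_smul_left, ← hq]
    nlinarith [sq_nonneg (p * q - r)]
  · set z : E := (1 - p ^ 2) • w - ((q - p * r) • u + (r - p * q) • v) with hz
    have h0 : (0:ℝ) ≤ inner ℝ z z := real_inner_self_nonneg
    have hexp : (inner ℝ z z : ℝ)
        = (1 - p ^ 2) * (1 + 2 * r * q * p - p ^ 2 - q ^ 2 - r ^ 2) := by
      simp only [hz, inner_sub_left, inner_sub_right, inner_add_left, inner_add_right,
        real_inner_smul_left, real_inner_smul_right, real_inner_self_eq_norm_sq,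
        hu, hv, hw, hvu2, hwu2, hwv2, ← hp, ← hq, ← hr,
        norm_smul, Real.norm_eq_abs, mul_pow, sq_abs, mul_one, one_pow]
      ring
    rw [hexp] at h0
    have habs := abs_real_inner_le_norm u v
    rw [hu, hv, ← hp] at habs
    have hple : p ^ 2 < 1 :=
      lt_of_le_of_ne (by nlinarith [habs, abs_nonneg p, sq_abs p]) h
    nlinarith [h0, hple]

theorem cosines_in_pillow
    (A B C D : EuclideanSpace ℝ (Fin 3))
    (hDA : D ≠ A) (hDB : D ≠ B) (hDC : D ≠ C) :
    1 + 2 * Real.cos (∠ B D C) * Real.cos (∠ A D C) * Real.cos (∠ A D B)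
      - Real.cos (∠ B D C) ^ 2 - Real.cos (∠ A D C) ^ 2 - Real.cos (∠ A D B) ^ 2 ≥ 0 := by
  have key : ∀ X Y : EuclideanSpace ℝ (Fin 3), X ≠ D → Y ≠ D →
      Real.cos (∠ X D Y)
        = (inner ℝ (‖X - D‖⁻¹ • (X - D)) (‖Y - D‖⁻¹ • (Y - D)) : ℝ) := by
    intro X Y hX hY
    have hx : (X - D : EuclideanSpace ℝ (Fin 3)) ≠ 0 := sub_ne_zero.mpr hX
    have hy : (Y - D : EuclideanSpace ℝ (Fin 3)) ≠ 0 := sub_ne_zero.mpr hY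
    have : ∠ X D Y = InnerProductGeometry.angle (X - D) (Y - D) := rfl
    rw [this, InnerProductGeometry.cos_angle, real_inner_smul_left, real_inner_smul_right]
    field_simp
  have hnorm : ∀ X : EuclideanSpace ℝ (Fin 3), X ≠ D → ‖‖X - D‖⁻¹ • (X - D)‖ = 1 := by
    intro X hX
    have hx : (X - D : EuclideanSpace ℝ (Fin 3)) ≠ 0 := sub_ne_zero.mpr hX
    rw [norm_smul, norm_inv, norm_norm, inv_mul_cancel₀ (norm_ne_zero_iff.mpr hx)]
  rw [key B C hDB.symm hDC.symm, key A C hDA.symm hDC.symm, key A B hDA.symm hDB.symm]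
  exact gram_nonneg _ _ _ (hnorm A hDA.symm) (hnorm B hDB.symm) (hnorm C hDC.symm)
end

section
/- The set 𝕡 = {(x₁,x₂,x₃) ∈ [-1,1]³ : 1 + 2x₁x₂x₃ - x₁² - x₂² - x₃² ≥ 0} is a convex subset of ℝ³. -/
lemma pillow_key (x y z : ℝ) (hx1 : -1 ≤ x) (hx2 : x ≤ 1) (hy1 : -1 ≤ y) (hy2 : y ≤ 1)
    (hdet : 1 + 2*x*y*z - x^2 - y^2 - z^2 ≥ 0) (u v w : ℝ) :
    u^2 + v^2 + w^2 + 2*u*v*x + 2*u*w*y + 2*v*w*z ≥ 0 := by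
  have hA : (0:ℝ) ≤ 1 - x^2 := by nlinarith
  have hC : (0:ℝ) ≤ 1 - y^2 := by nlinarith
  have hD : (1-x^2)*(1-y^2) - (z-x*y)^2 ≥ 0 := by nlinarith [hdet]
  have hsub : (1-x^2)*v^2 + 2*(z-x*y)*v*w + (1-y^2)*w^2 ≥ 0 := by
    rcases eq_or_lt_of_le hA with h0 | hpos
    · have hB : z - x*y = 0 := by nlinarith [sq_nonneg (z-x*y)]
      have h0' : 1 - x^2 = 0 := h0.symm
      rw [h0', hB]
      nlinarith [mul_nonneg hC (sq_nonneg w)]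
    · nlinarith [sq_nonneg ((1-x^2)*v + (z-x*y)*w), mul_nonneg hD (sq_nonneg w), hpos]
  nlinarith [sq_nonneg (u + x*v + y*w), hsub]

lemma pillow_rev (x y z : ℝ)
    (h : ∀ u v w : ℝ, u^2 + v^2 + w^2 + 2*u*v*x + 2*u*w*y + 2*v*w*z ≥ 0) :
    (-1 ≤ x ∧ x ≤ 1) ∧ (-1 ≤ y ∧ y ≤ 1) ∧ (-1 ≤ z ∧ z ≤ 1) ∧
      1 + 2*x*y*z - x^2 - y^2 - z^2 ≥ 0 := by
  have hx1 : -1 ≤ x := by nlinarith [h 1 1 0]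
  have hx2 : x ≤ 1 := by nlinarith [h 1 (-1) 0]
  have hy1 : -1 ≤ y := by nlinarith [h 1 0 1]
  have hy2 : y ≤ 1 := by nlinarith [h 1 0 (-1)]
  have hz1 : -1 ≤ z := by nlinarith [h 0 1 1]
  have hz2 : z ≤ 1 := by nlinarith [h 0 1 (-1)]
  refine ⟨⟨hx1, hx2⟩, ⟨hy1, hy2⟩, ⟨hz1, hz2⟩, ?_⟩
  rcases eq_or_lt_of_le hz2 with h1 | hlt1
  · -- z = 1 : take u = -(x-y), v = 1, w = -1 to get x = y
    have hxy : x = y := by nlinarith [h (-(x - y)) 1 (-1), h1]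
    subst h1; subst hxy; nlinarith [sq_nonneg x]
  rcases eq_or_lt_of_le hz1 with h1 | hlt2
  · -- z = -1 : take u = -(x+y), v = 1, w = 1 to get x = -y
    have hxy : x = -y := by nlinarith [h (-(x + y)) 1 1, h1]
    rw [← h1] at *; subst hxy; nlinarith [sq_nonneg y]
  · -- -1 < z < 1 : use adjugate vector
    have hq := h (1 - z^2) (y*z - x) (x*z - y)
    -- hq equals det * (1-z^2)
    have hz : (0:ℝ) < 1 - z^2 := by nlinarith
    nlinarith [hq, hz, mul_pos hz hz]

theorem pillow_convex :
    Convex ℝ {p : ℝ × ℝ × ℝ |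
      p.1 ∈ Set.Icc (-1 : ℝ) 1 ∧ p.2.1 ∈ Set.Icc (-1 : ℝ) 1 ∧ p.2.2 ∈ Set.Icc (-1 : ℝ) 1 ∧
      1 + 2 * p.1 * p.2.1 * p.2.2 - p.1 ^ 2 - p.2.1 ^ 2 - p.2.2 ^ 2 ≥ 0} := by
  intro p hp q hq a b ha hb hab
  simp only [Set.mem_setOf_eq, Set.mem_Icc] at hp hq ⊢
  obtain ⟨⟨hp1, hp2⟩, ⟨hp3, hp4⟩, ⟨hp5, hp6⟩, hpd⟩ := hp
  obtain ⟨⟨hq1, hq2⟩, ⟨hq3, hq4⟩, ⟨hq5, hq6⟩, hqd⟩ := hq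
  have hpQ := pillow_key p.1 p.2.1 p.2.2 hp1 hp2 hp3 hp4 hpd
  have hqQ := pillow_key q.1 q.2.1 q.2.2 hq1 hq2 hq3 hq4 hqd
  have hb' : b = 1 - a := by linarith
  subst hb'
  have hcomb : ∀ u v w : ℝ,
      u^2 + v^2 + w^2 + 2*u*v*(a • p + (1-a) • q).1 + 2*u*w*(a • p + (1-a) • q).2.1
        + 2*v*w*(a • p + (1-a) • q).2.2 ≥ 0 := by
    intro u v w
    have h1 := mul_nonneg ha (hpQ u v w)
    have h2 := mul_nonneg hb (hqQ u v w)
    simp only [Prod.fst_add, Prod.snd_add, Prod.smul_fst, Prod.smul_snd, smul_eq_mul]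
    nlinarith [h1, h2]
  have := pillow_rev _ _ _ hcomb
  exact ⟨⟨this.1.1, this.1.2⟩, ⟨this.2.1.1, this.2.1.2⟩, ⟨this.2.2.1.1, this.2.2.1.2⟩,
    by nlinarith [this.2.2.2]⟩
end

section
/- The tetrahedron with vertices (1,1,1), (1,-1,-1), (-1,1,-1), (-1,-1,1) is contained in the pillow 𝕡, i.e. every convex combination of these four points satisfies 1 + 2x₁x₂x₃ - x₁² - x₂² - x₃² ≥ 0. -/
theorem tetrahedron_subset_pillow (a b c d : ℝ)
    (ha : 0 ≤ a) (hb : 0 ≤ b) (hc : 0 ≤ c) (hd : 0 ≤ d) (hsum : a + b + c + d = 1)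
    (p : ℝ × ℝ × ℝ)
    (hp : p = a • ((1 : ℝ), (1 : ℝ), (1 : ℝ)) + b • ((1 : ℝ), (-1 : ℝ), (-1 : ℝ))
        + c • ((-1 : ℝ), (1 : ℝ), (-1 : ℝ)) + d • ((-1 : ℝ), (-1 : ℝ), (1 : ℝ))) :
    1 + 2 * p.1 * p.2.1 * p.2.2 - p.1 ^ 2 - p.2.1 ^ 2 - p.2.2 ^ 2 ≥ 0 := by
  subst hp
  simp only [Prod.smul_mk, Prod.mk_add_mk, smul_eq_mul]
  nlinarith [mul_nonneg ha hb, mul_nonneg hc hd, mul_nonneg ha hc, mul_nonneg hb hd,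
    mul_nonneg ha hd, mul_nonneg hb hc, mul_nonneg (mul_nonneg ha hb) hc,
    mul_nonneg (mul_nonneg ha hb) hd, mul_nonneg (mul_nonneg ha hc) hd,
    mul_nonneg (mul_nonneg hb hc) hd, sq_nonneg (a+b+c+d)]
end

section
/- Every nontrivial line segment contained in the pillowcase 𝔹𝕡 = {(x₁,x₂,x₃) ∈ [-1,1]³ : 1 + 2x₁x₂x₃ - x₁² - x₂² - x₃² = 0} is contained in one of the six edges of the tetrahedron with vertices (1,1,1), (1,-1,-1), (-1,1,-1), (-1,-1,1). -/
lemma seg_aux (a1 a2 c b1 b2 : ℝ) (hc : c ^ 2 ≤ 1) (hne : (a1, a2) ≠ (b1, b2))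
    (H : ∀ t ∈ Set.Icc (0:ℝ) 1,
      1 + 2*((1-t)*a1+t*b1)*((1-t)*a2+t*b2)*c - ((1-t)*a1+t*b1)^2
        - ((1-t)*a2+t*b2)^2 - c^2 = 0) :
    c ^ 2 = 1 ∧ a1 = c * a2 ∧ b1 = c * b2 := by
  have h0 := H 0 (by norm_num)
  have h1 := H 1 (by norm_num)
  have hh := H (1/2) (by norm_num)
  have K : (b1-a1)^2 + (b2-a2)^2 - 2*c*(b1-a1)*(b2-a2) = 0 := by
    linear_combination (-2)*h0 + (-2)*h1 + 4*hh
  have key : (b1 - a1 - c*(b2-a2))^2 + (1-c^2)*(b2-a2)^2 = 0 := by linear_combination K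
  have t1 : (b1 - a1 - c*(b2-a2))^2 = 0 := by
    nlinarith [sq_nonneg (b1 - a1 - c*(b2-a2)), sq_nonneg (b2-a2)]
  have t2 : (1-c^2)*(b2-a2)^2 = 0 := by
    nlinarith [sq_nonneg (b1 - a1 - c*(b2-a2)), sq_nonneg (b2-a2)]
  have huv : b1 - a1 = c*(b2-a2) := by
    have := pow_eq_zero_iff (n := 2) (by norm_num) |>.mp t1
    linarith [this]
  have hv : b2 ≠ a2 := by
    intro h
    apply hne
    have : b1 = a1 := by rw [h] at huv; linarith [huv]
    simp [this.symm, h.symm]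
  have hc2 : c ^ 2 = 1 := by
    rcases mul_eq_zero.mp t2 with h | h
    · linarith
    · exact absurd (sub_eq_zero.mp (pow_eq_zero_iff (n := 2) (by norm_num) |>.mp h)) hv
  refine ⟨hc2, ?_, ?_⟩
  · have : (a1 - c*a2)^2 = 0 := by linear_combination (-1)*h0 + (a2^2 - 1)*hc2
    have := sub_eq_zero.mp (pow_eq_zero_iff (n := 2) (by norm_num) |>.mp this)
    linarith
  · have : (b1 - c*b2)^2 = 0 := by linear_combination (-1)*h1 + (b2^2 - 1)*hc2
    have := sub_eq_zero.mp (pow_eq_zero_iff (n := 2) (by norm_num) |>.mp this)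
    linarith

lemma edge_sub (v w p q : ℝ×ℝ×ℝ) (s t : ℝ) (hs : -1 ≤ s) (hs' : s ≤ 1)
    (ht : -1 ≤ t) (ht' : t ≤ 1)
    (hp : p = ((1+s)/2) • v + ((1-s)/2) • w)
    (hq : q = ((1+t)/2) • v + ((1-t)/2) • w) :
    segment ℝ p q ⊆ segment ℝ v w :=
  (convex_segment v w).segment_subset
    ⟨(1+s)/2, (1-s)/2, by linarith, by linarith, by ring, hp.symm⟩
    ⟨(1+t)/2, (1-t)/2, by linarith, by linarith, by ring, hq.symm⟩

/-- The pillowcase surface. -/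
def pillowcase : Set (ℝ × ℝ × ℝ) :=
  {p | p.1 ∈ Set.Icc (-1 : ℝ) 1 ∧ p.2.1 ∈ Set.Icc (-1 : ℝ) 1 ∧ p.2.2 ∈ Set.Icc (-1 : ℝ) 1 ∧
    1 + 2 * p.1 * p.2.1 * p.2.2 - p.1 ^ 2 - p.2.1 ^ 2 - p.2.2 ^ 2 = 0}

theorem segment_in_pillowcase_in_edge (p q : ℝ × ℝ × ℝ) (hpq : p ≠ q)
    (hseg : segment ℝ p q ⊆ pillowcase) :
    ∃ v w : ℝ × ℝ × ℝ,
      v ∈ ({((1:ℝ),(1:ℝ),(1:ℝ)), (1,-1,-1), (-1,1,-1), (-1,-1,1)} : Set (ℝ × ℝ × ℝ)) ∧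
      w ∈ ({((1:ℝ),(1:ℝ),(1:ℝ)), (1,-1,-1), (-1,1,-1), (-1,-1,1)} : Set (ℝ × ℝ × ℝ)) ∧
      v ≠ w ∧ segment ℝ p q ⊆ segment ℝ v w := by
  obtain ⟨p1, p2, p3⟩ := p
  obtain ⟨q1, q2, q3⟩ := q
  have hpP := hseg (left_mem_segment ℝ _ _)
  have hqP := hseg (right_mem_segment ℝ _ _)
  simp only [pillowcase, Set.mem_setOf_eq, Set.mem_Icc] at hpP hqP
  have E : ∀ t ∈ Set.Icc (0:ℝ) 1,
      1 + 2*((1-t)*p1+t*q1)*((1-t)*p2+t*q2)*((1-t)*p3+t*q3)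
        - ((1-t)*p1+t*q1)^2 - ((1-t)*p2+t*q2)^2 - ((1-t)*p3+t*q3)^2 = 0 := by
    intro t ht
    have hmem : ((1-t)*p1+t*q1, (1-t)*p2+t*q2, (1-t)*p3+t*q3) ∈
        segment ℝ (p1, p2, p3) (q1, q2, q3) := by
      refine ⟨1-t, t, by linarith [ht.1, ht.2], ht.1, by ring, ?_⟩
      simp [Prod.smul_mk, Prod.mk_add_mk, smul_eq_mul]
    exact (hseg hmem).2.2.2
  have hA : 2*(q1-p1)*(q2-p2)*(q3-p3) = 0 := by
    have e0 := E 0 (by norm_num)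
    have e1 := E 1 (by norm_num)
    have e2 := E (1/3) (by norm_num)
    have e3 := E (2/3) (by norm_num)
    linear_combination (9/2)*e1 - (27/2)*e3 + (27/2)*e2 - (9/2)*e0
  rcases mul_eq_zero.mp hA with h | h3
  rcases mul_eq_zero.mp h with h | h2
  · -- q1 = p1 : the segment has constant first coordinate
    have h1 : q1 = p1 := by
      have h' := (mul_eq_zero.mp h).resolve_left (by norm_num)
      linarith
    subst h1
    -- note: p1 has been replaced by q1 everywhere
    have hne : (p2, p3) ≠ (q2, q3) := by
      intro h; apply hpq; rw [Prod.mk.injEq] at h; rw [h.1, h.2]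
    obtain ⟨hc2, ha, hb⟩ := seg_aux p2 p3 q1 q2 q3
      (by nlinarith [hpP.1.1, hpP.1.2]) hne
      (fun t ht => by linear_combination E t ht)
    rcases mul_eq_zero.mp (show (q1-1)*(q1+1) = 0 by linear_combination hc2) with h | h
    · -- q1 = 1 : p = (1, p3, p3), edge (1,1,1)-(1,-1,-1)
      have hp1 : q1 = 1 := by linarith
      rw [hp1] at ha hb; rw [one_mul] at ha hb
      refine ⟨(1,1,1), (1,-1,-1), by norm_num, by norm_num,
        by norm_num [Prod.ext_iff],
        edge_sub _ _ _ _ p3 q3 hpP.2.2.1.1 hpP.2.2.1.2 hqP.2.2.1.1 hqP.2.2.1.2 ?_ ?_⟩ <;>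
      · rw [Prod.ext_iff, Prod.ext_iff]
        simp only [Prod.smul_mk, Prod.mk_add_mk, smul_eq_mul, Prod.fst_add, Prod.snd_add]
        refine ⟨by linarith, by linarith, by linarith⟩
    · -- q1 = -1 : p = (-1, -p3, p3), edge (-1,1,-1)-(-1,-1,1)
      have hp1 : q1 = -1 := by linarith
      rw [hp1] at ha hb; rw [neg_one_mul] at ha hb
      refine ⟨(-1,1,-1), (-1,-1,1), by norm_num, by norm_num,
        by norm_num [Prod.ext_iff],
        edge_sub _ _ _ _ (-p3) (-q3) (by linarith [hpP.2.2.1.2]) (by linarith [hpP.2.2.1.1])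
          (by linarith [hqP.2.2.1.2]) (by linarith [hqP.2.2.1.1]) ?_ ?_⟩ <;>
      · rw [Prod.ext_iff, Prod.ext_iff]
        simp only [Prod.smul_mk, Prod.mk_add_mk, smul_eq_mul, Prod.fst_add, Prod.snd_add]
        refine ⟨by linarith, by linarith, by linarith⟩
  · -- q2 = p2 : constant second coordinate
    have h1 : q2 = p2 := by linarith
    subst h1
    have hne : (p1, p3) ≠ (q1, q3) := by
      intro h; apply hpq; rw [Prod.mk.injEq] at h; rw [h.1, h.2]
    obtain ⟨hc2, ha, hb⟩ := seg_aux p1 p3 q2 q1 q3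
      (by nlinarith [hpP.2.1.1, hpP.2.1.2]) hne
      (fun t ht => by linear_combination E t ht)
    rcases mul_eq_zero.mp (show (q2-1)*(q2+1) = 0 by linear_combination hc2) with h | h
    · -- q2 = 1 : p = (p3, 1, p3), edge (1,1,1)-(-1,1,-1)
      have hp1 : q2 = 1 := by linarith
      rw [hp1] at ha hb; rw [one_mul] at ha hb
      refine ⟨(1,1,1), (-1,1,-1), by norm_num, by norm_num,
        by norm_num [Prod.ext_iff],
        edge_sub _ _ _ _ p3 q3 hpP.2.2.1.1 hpP.2.2.1.2 hqP.2.2.1.1 hqP.2.2.1.2 ?_ ?_⟩ <;>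
      · rw [Prod.ext_iff, Prod.ext_iff]
        simp only [Prod.smul_mk, Prod.mk_add_mk, smul_eq_mul, Prod.fst_add, Prod.snd_add]
        refine ⟨by linarith, by linarith, by linarith⟩
    · -- q2 = -1 : p = (-p3, -1, p3), edge (1,-1,-1)-(-1,-1,1)
      have hp1 : q2 = -1 := by linarith
      rw [hp1] at ha hb; rw [neg_one_mul] at ha hb
      refine ⟨(1,-1,-1), (-1,-1,1), by norm_num, by norm_num,
        by norm_num [Prod.ext_iff],
        edge_sub _ _ _ _ (-p3) (-q3) (by linarith [hpP.2.2.1.2]) (by linarith [hpP.2.2.1.1])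
          (by linarith [hqP.2.2.1.2]) (by linarith [hqP.2.2.1.1]) ?_ ?_⟩ <;>
      · rw [Prod.ext_iff, Prod.ext_iff]
        simp only [Prod.smul_mk, Prod.mk_add_mk, smul_eq_mul, Prod.fst_add, Prod.snd_add]
        refine ⟨by linarith, by linarith, by linarith⟩
  · -- q3 = p3 : constant third coordinate
    have h1 : q3 = p3 := by linarith
    subst h1
    have hne : (p1, p2) ≠ (q1, q2) := by
      intro h; apply hpq; rw [Prod.mk.injEq] at h; rw [h.1, h.2]
    obtain ⟨hc2, ha, hb⟩ := seg_aux p1 p2 q3 q1 q2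
      (by nlinarith [hpP.2.2.1.1, hpP.2.2.1.2]) hne
      (fun t ht => by linear_combination E t ht)
    rcases mul_eq_zero.mp (show (q3-1)*(q3+1) = 0 by linear_combination hc2) with h | h
    · -- q3 = 1 : p = (p2, p2, 1), edge (1,1,1)-(-1,-1,1)
      have hp1 : q3 = 1 := by linarith
      rw [hp1] at ha hb; rw [one_mul] at ha hb
      refine ⟨(1,1,1), (-1,-1,1), by norm_num, by norm_num,
        by norm_num [Prod.ext_iff],
        edge_sub _ _ _ _ p2 q2 hpP.2.1.1 hpP.2.1.2 hqP.2.1.1 hqP.2.1.2 ?_ ?_⟩ <;>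
      · rw [Prod.ext_iff, Prod.ext_iff]
        simp only [Prod.smul_mk, Prod.mk_add_mk, smul_eq_mul, Prod.fst_add, Prod.snd_add]
        refine ⟨by linarith, by linarith, by linarith⟩
    · -- q3 = -1 : p = (-p2, p2, -1), edge (1,-1,-1)-(-1,1,-1)
      have hp1 : q3 = -1 := by linarith
      rw [hp1] at ha hb; rw [neg_one_mul] at ha hb
      refine ⟨(1,-1,-1), (-1,1,-1), by norm_num, by norm_num,
        by norm_num [Prod.ext_iff],
        edge_sub _ _ _ _ (-p2) (-q2) (by linarith [hpP.2.1.2]) (by linarith [hpP.2.1.1])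
          (by linarith [hqP.2.1.2]) (by linarith [hqP.2.1.1]) ?_ ?_⟩ <;>
      · rw [Prod.ext_iff, Prod.ext_iff]
        simp only [Prod.smul_mk, Prod.mk_add_mk, smul_eq_mul, Prod.fst_add, Prod.snd_add]
        refine ⟨by linarith, by linarith, by linarith⟩
end

section
/- Fix y₀, z₀ ∈ (0,1) and let x₀ = -(y₀z₀ - √((1−y₀²)(1−z₀²))) (so that x₀ = -cos(β+γ) where y₀ = cos β, z₀ = cos γ). If x₀ ≤ 0, then there is no point (x,y,z) on the pillowcase with x < x₀, y > y₀, and z > z₀. -/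
theorem pillowcase_mpp_empty (y₀ z₀ x₀ : ℝ)
    (hy₀ : y₀ ∈ Set.Ioo (0 : ℝ) 1) (hz₀ : z₀ ∈ Set.Ioo (0 : ℝ) 1)
    (hx₀ : x₀ = -(y₀ * z₀ - Real.sqrt ((1 - y₀ ^ 2) * (1 - z₀ ^ 2))))
    (hx₀le : x₀ ≤ 0) :
    ¬ ∃ x y z : ℝ, x ∈ Set.Icc (-1 : ℝ) 1 ∧ y ∈ Set.Icc (-1 : ℝ) 1 ∧ z ∈ Set.Icc (-1 : ℝ) 1 ∧
      1 + 2 * x * y * z - x ^ 2 - y ^ 2 - z ^ 2 = 0 ∧ x < x₀ ∧ y₀ < y ∧ z₀ < z := by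
  rintro ⟨x, y, z, hx, hy, hz, heq, hxlt, hylt, hzlt⟩
  obtain ⟨hy0, hy1⟩ := hy₀
  obtain ⟨hz0, hz1⟩ := hz₀
  have hy' : y ≤ 1 := hy.2
  have hz' : z ≤ 1 := hz.2
  have hP : (1 - y ^ 2) * (1 - z ^ 2) ≤ (1 - y₀ ^ 2) * (1 - z₀ ^ 2) := by
    have h1 : (0:ℝ) ≤ 1 - y ^ 2 := by nlinarith
    have h2 : (0:ℝ) ≤ 1 - z ^ 2 := by nlinarith
    exact mul_le_mul (by nlinarith) (by nlinarith) h2 (by nlinarith)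
  have hsq : Real.sqrt ((1 - y ^ 2) * (1 - z ^ 2)) ≤
      Real.sqrt ((1 - y₀ ^ 2) * (1 - z₀ ^ 2)) := Real.sqrt_le_sqrt hP
  have h1 : Real.sqrt ((1 - y₀ ^ 2) * (1 - z₀ ^ 2)) ≤ y₀ * z₀ := by
    rw [hx₀] at hx₀le; linarith
  have heq2 : ((x - y * z)) ^ 2 = (1 - y ^ 2) * (1 - z ^ 2) := by nlinarith
  have habs : y * z - x ≤ Real.sqrt ((1 - y ^ 2) * (1 - z ^ 2)) := by
    rw [← heq2, Real.sqrt_sq_eq_abs]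
    have := neg_abs_le (x - y * z)
    linarith
  have hyz : y₀ * z₀ < y * z := by nlinarith
  linarith
end

section
/- Suppose D is a point in the plane of nondegenerate triangle ABC with D ∉ {A,B,C}, and suppose (cos∠BDC, cos∠ADC, cos∠ADB) = (−cos∠BAC, −cos∠ABC, −cos∠ACB). Then ∠BDC + ∠ADC + ∠ADB = 2π, and D lies in the interior of triangle ABC. -/
private lemma same_sign (sa sb sc ca cb cc nu nv nw c1 c2 c3 : ℝ)
    (hnu : 0 < nu) (hnv : 0 < nv) (hnw : 0 < nw)
    (hsa : 0 < sa) (hsb : 0 < sb) (hsc : 0 < sc)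
    (hua : sa ^ 2 + ca ^ 2 = 1) (hub : sb ^ 2 + cb ^ 2 = 1)
    (hcc : cc = sa * sb - ca * cb) (hscc : sc = sa * cb + ca * sb)
    (hc1 : c1 ^ 2 = (sa * (nv * nw)) ^ 2)
    (hc2 : c2 ^ 2 = (sb * (nw * nu)) ^ 2)
    (hc3 : c3 ^ 2 = (sc * (nu * nv)) ^ 2)
    (hre : (-(ca * (nv * nw))) * (-(cb * (nw * nu))) * (-(cc * (nu * nv)))
        - (-(ca * (nv * nw))) * c2 * c3 - c1 * (-(cb * (nw * nu))) * c3
        - c1 * c2 * (-(cc * (nu * nv))) = (nu * nv * nw) ^ 2) :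
    (0 < c1 ∧ 0 < c2 ∧ 0 < c3) ∨ (c1 < 0 ∧ c2 < 0 ∧ c3 < 0) := by
  subst hcc hscc
  have e1 : c1 = sa * (nv * nw) ∨ c1 = -(sa * (nv * nw)) := by
    have h : (c1 - sa * (nv * nw)) * (c1 + sa * (nv * nw)) = 0 := by linear_combination hc1
    rcases mul_eq_zero.mp h with h' | h'
    · left; linarith
    · right; linarith
  have e2 : c2 = sb * (nw * nu) ∨ c2 = -(sb * (nw * nu)) := by
    have h : (c2 - sb * (nw * nu)) * (c2 + sb * (nw * nu)) = 0 := by linear_combination hc2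
    rcases mul_eq_zero.mp h with h' | h'
    · left; linarith
    · right; linarith
  have e3 : c3 = (sa * cb + ca * sb) * (nu * nv) ∨ c3 = -((sa * cb + ca * sb) * (nu * nv)) := by
    have h : (c3 - (sa * cb + ca * sb) * (nu * nv)) * (c3 + (sa * cb + ca * sb) * (nu * nv)) = 0 := by
      linear_combination hc3
    rcases mul_eq_zero.mp h with h' | h'
    · left; linarith
    · right; linarith
  have hM : (0:ℝ) < (nu * nv * nw) ^ 2 := by positivity
  have hpos1 : (0:ℝ) < sa * (nv * nw) := by positivity
  have hpos2 : (0:ℝ) < sb * (nw * nu) := by positivity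
  have hpos3 : (0:ℝ) < (sa * cb + ca * sb) * (nu * nv) := by
    have : 0 < sa * cb + ca * sb := hsc
    positivity
  -- contradiction helpers
  rcases e1 with f1 | f1 <;> rcases e2 with f2 | f2 <;> rcases e3 with f3 | f3 <;>
    subst f1 <;> subst f2 <;> subst f3
  · exact Or.inl ⟨hpos1, hpos2, hpos3⟩
  · -- (+,+,-): ε3 odd, case C
    exfalso
    have key : (sa * cb + ca * sb) ^ 2 * (nu * nv * nw) ^ 2 = 0 := by
      linear_combination (-(1:ℝ)/2) * hre + ((nu*nv*nw)^2*(sb^2+cb^2)/2) * hua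
        + ((nu*nv*nw)^2/2) * hub
    nlinarith [hsc, hM, mul_pos (mul_pos hsc hsc) hM]
  · -- (+,-,+): ε2 odd, case B
    exfalso
    have key : sb ^ 2 * (nu * nv * nw) ^ 2 = 0 := by
      linear_combination (-(1:ℝ)/2) * hre + ((nu*nv*nw)^2*(cb^2-sb^2)/2) * hua
        + ((nu*nv*nw)^2/2) * hub
    nlinarith [mul_pos (mul_pos hsb hsb) hM]
  · -- (+,-,-): ε1 odd, case A
    exfalso
    have key : sa ^ 2 * (nu * nv * nw) ^ 2 = 0 := by
      linear_combination (-(1:ℝ)/2) * hre + ((nu*nv*nw)^2/2) * hua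
        + ((nu*nv*nw)^2*(ca^2-sa^2)/2) * hub
    nlinarith [mul_pos (mul_pos hsa hsa) hM]
  · -- (-,+,+): ε1 odd, case A
    exfalso
    have key : sa ^ 2 * (nu * nv * nw) ^ 2 = 0 := by
      linear_combination (-(1:ℝ)/2) * hre + ((nu*nv*nw)^2/2) * hua
        + ((nu*nv*nw)^2*(ca^2-sa^2)/2) * hub
    nlinarith [mul_pos (mul_pos hsa hsa) hM]
  · -- (-,+,-): ε2 odd, case B
    exfalso
    have key : sb ^ 2 * (nu * nv * nw) ^ 2 = 0 := by
      linear_combination (-(1:ℝ)/2) * hre + ((nu*nv*nw)^2*(cb^2-sb^2)/2) * hua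
        + ((nu*nv*nw)^2/2) * hub
    nlinarith [mul_pos (mul_pos hsb hsb) hM]
  · -- (-,-,+): ε3 odd, case C
    exfalso
    have key : (sa * cb + ca * sb) ^ 2 * (nu * nv * nw) ^ 2 = 0 := by
      linear_combination (-(1:ℝ)/2) * hre + ((nu*nv*nw)^2*(sb^2+cb^2)/2) * hua
        + ((nu*nv*nw)^2/2) * hub
    nlinarith [hsc, hM, mul_pos (mul_pos hsc hsc) hM]
  · exact Or.inr ⟨by linarith, by linarith, by linarith⟩

open EuclideanGeometry Real

private lemma interior_aux (A B C D : EuclideanSpace ℝ (Fin 2))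
    (h1 : 0 < (B 0 - D 0) * (C 1 - D 1) - (B 1 - D 1) * (C 0 - D 0))
    (h2 : 0 < (C 0 - D 0) * (A 1 - D 1) - (C 1 - D 1) * (A 0 - D 0))
    (h3 : 0 < (A 0 - D 0) * (B 1 - D 1) - (A 1 - D 1) * (B 0 - D 0)) :
    D ∈ interior (convexHull ℝ ({A, B, C} : Set (EuclideanSpace ℝ (Fin 2)))) := by
  rw [mem_interior]
  have happ : ∀ i : Fin 2, Continuous (fun x : EuclideanSpace ℝ (Fin 2) => x i) :=
    fun i => (EuclideanSpace.proj (𝕜 := ℝ) i).continuous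
  refine ⟨{x | 0 < (B 0 - x 0) * (C 1 - x 1) - (B 1 - x 1) * (C 0 - x 0)} ∩
      ({x | 0 < (C 0 - x 0) * (A 1 - x 1) - (C 1 - x 1) * (A 0 - x 0)} ∩
       {x | 0 < (A 0 - x 0) * (B 1 - x 1) - (A 1 - x 1) * (B 0 - x 0)}), ?_, ?_, h1, h2, h3⟩
  · rintro x ⟨k1, k2, k3⟩
    simp only [Set.mem_setOf_eq] at k1 k2 k3
    set c1 : ℝ := (B 0 - x 0) * (C 1 - x 1) - (B 1 - x 1) * (C 0 - x 0) with hc1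
    set c2 : ℝ := (C 0 - x 0) * (A 1 - x 1) - (C 1 - x 1) * (A 0 - x 0) with hc2
    set c3 : ℝ := (A 0 - x 0) * (B 1 - x 1) - (A 1 - x 1) * (B 0 - x 0) with hc3
    have hs : 0 < c1 + c2 + c3 := by positivity
    have key : c1 • A + c2 • B + c3 • C = (c1 + c2 + c3) • x := by
      ext i
      fin_cases i <;>
        simp only [PiLp.add_apply, PiLp.smul_apply, smul_eq_mul, hc1, hc2, hc3, Fin.mk_zero, Fin.mk_one] <;> ring
    have hx : x = Finset.univ.centerMass ![c1, c2, c3] ![A, B, C] := by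
      rw [Finset.centerMass]
      simp only [Fin.sum_univ_three, Matrix.cons_val_zero, Matrix.cons_val_one, Matrix.head_cons,
        Matrix.cons_val_two, Matrix.tail_cons]
      rw [key, smul_smul, inv_mul_cancel₀ (ne_of_gt hs), one_smul]
    rw [hx]
    apply Finset.centerMass_mem_convexHull
    · intro i _
      fin_cases i <;> simp [le_of_lt k1, le_of_lt k2, le_of_lt k3]
    · simpa [Fin.sum_univ_three] using hs
    · intro i _
      fin_cases i <;> simp
  · refine IsOpen.inter ?_ (IsOpen.inter ?_ ?_) <;>
      exact isOpen_lt continuous_const (by fun_prop)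

open EuclideanGeometry Real

set_option maxHeartbeats 1000000 in
theorem orthocenter_case (A B C D : EuclideanSpace ℝ (Fin 2))
    (hABC : ¬ Collinear ℝ ({A, B, C} : Set (EuclideanSpace ℝ (Fin 2))))
    (hDA : D ≠ A) (hDB : D ≠ B) (hDC : D ≠ C)
    (h₁ : Real.cos (∠ B D C) = -Real.cos (∠ B A C))
    (h₂ : Real.cos (∠ A D C) = -Real.cos (∠ A B C))
    (h₃ : Real.cos (∠ A D B) = -Real.cos (∠ A C B)) :
    ∠ B D C + ∠ A D C + ∠ A D B = 2 * π ∧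
    D ∈ interior (convexHull ℝ ({A, B, C} : Set (EuclideanSpace ℝ (Fin 2)))) := by
  have hBAC : ¬ Collinear ℝ ({B, A, C} : Set (EuclideanSpace ℝ (Fin 2))) := by
    rwa [Set.insert_comm]
  have hACB : ¬ Collinear ℝ ({A, C, B} : Set (EuclideanSpace ℝ (Fin 2))) := by
    rwa [Set.pair_comm C B]
  have hAC : A ≠ C := by
    rintro rfl
    refine hABC (Collinear.subset ?_ (collinear_pair ℝ A B))
    intro x hx; simp at hx ⊢; tauto
  have hBC : B ≠ C := by
    rintro rfl
    refine hABC (Collinear.subset ?_ (collinear_pair ℝ A B))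
    intro x hx; simp at hx ⊢; tauto
  -- angles of the triangle
  have hα : 0 < ∠ B A C ∧ ∠ B A C < π :=
    ⟨angle_pos_of_not_collinear hBAC, angle_lt_pi_of_not_collinear hBAC⟩
  have hβ : 0 < ∠ A B C ∧ ∠ A B C < π :=
    ⟨angle_pos_of_not_collinear hABC, angle_lt_pi_of_not_collinear hABC⟩
  have hγ : 0 < ∠ A C B ∧ ∠ A C B < π :=
    ⟨angle_pos_of_not_collinear hACB, angle_lt_pi_of_not_collinear hACB⟩
  have hsum : ∠ B A C + ∠ A B C + ∠ A C B = π := by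
    have := EuclideanGeometry.angle_add_angle_add_angle_eq_pi (P := EuclideanSpace ℝ (Fin 2))
      (p₁ := C) (p₂ := A) (p₃ := B) hAC
    rw [angle_comm C A B, angle_comm B C A] at this
    linarith
  -- angles at D
  have key : ∀ X Y : EuclideanSpace ℝ (Fin 2), ∀ θ : ℝ, 0 < θ → θ < π →
      Real.cos (∠ X D Y) = -Real.cos θ → ∠ X D Y = π - θ := by
    intro X Y θ h0 hπ h
    apply Real.injOn_cos ⟨angle_nonneg _ _ _, angle_le_pi _ _ _⟩
      ⟨by linarith, by linarith⟩
    rw [h, Real.cos_pi_sub]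
  have e1 : ∠ B D C = π - ∠ B A C := key B C _ hα.1 hα.2 h₁
  have e2 : ∠ A D C = π - ∠ A B C := key A C _ hβ.1 hβ.2 h₂
  have e3 : ∠ A D B = π - ∠ A C B := key A B _ hγ.1 hγ.2 h₃
  constructor
  · rw [e1, e2, e3]; linarith
  -- second part
  set u0 : ℝ := A 0 - D 0 with hu0
  set u1 : ℝ := A 1 - D 1 with hu1
  set v0 : ℝ := B 0 - D 0 with hv0
  set v1 : ℝ := B 1 - D 1 with hv1
  set w0 : ℝ := C 0 - D 0 with hw0
  set w1 : ℝ := C 1 - D 1 with hw1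
  set nu : ℝ := ‖A - D‖ with hnu'
  set nv : ℝ := ‖B - D‖ with hnv'
  set nw : ℝ := ‖C - D‖ with hnw'
  have hnu : u0 ^ 2 + u1 ^ 2 = nu ^ 2 := by
    rw [hnu', ← real_inner_self_eq_norm_sq, PiLp.inner_apply]
    simp [PiLp.inner_apply, Fin.sum_univ_two, PiLp.sub_apply, RCLike.inner_apply, hu0, hu1]
  have hnv : v0 ^ 2 + v1 ^ 2 = nv ^ 2 := by
    rw [hnv', ← real_inner_self_eq_norm_sq, PiLp.inner_apply]
    simp [PiLp.inner_apply, Fin.sum_univ_two, PiLp.sub_apply, RCLike.inner_apply, hv0, hv1]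
  have hnw : w0 ^ 2 + w1 ^ 2 = nw ^ 2 := by
    rw [hnw', ← real_inner_self_eq_norm_sq, PiLp.inner_apply]
    simp [PiLp.inner_apply, Fin.sum_univ_two, PiLp.sub_apply, RCLike.inner_apply, hw0, hw1]
  have hnup : 0 < nu := by rw [hnu']; exact norm_sub_pos_iff.mpr (fun h => hDA h.symm)
  have hnvp : 0 < nv := by rw [hnv']; exact norm_sub_pos_iff.mpr (fun h => hDB h.symm)
  have hnwp : 0 < nw := by rw [hnw']; exact norm_sub_pos_iff.mpr (fun h => hDC h.symm)
  -- inner products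
  have inner_coord : ∀ X Y : EuclideanSpace ℝ (Fin 2),
      (inner ℝ (X - D) (Y - D) : ℝ) = (X 0 - D 0) * (Y 0 - D 0) + (X 1 - D 1) * (Y 1 - D 1) := by
    intro X Y
    simp [PiLp.inner_apply, Fin.sum_univ_two, PiLp.sub_apply, RCLike.inner_apply]
    ring
  have inner_angle : ∀ X Y : EuclideanSpace ℝ (Fin 2),
      (inner ℝ (X - D) (Y - D) : ℝ) = Real.cos (∠ X D Y) * (‖X - D‖ * ‖Y - D‖) := by
    intro X Y
    rw [EuclideanGeometry.angle, vsub_eq_sub, vsub_eq_sub]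
    exact (InnerProductGeometry.cos_angle_mul_norm_mul_norm (X - D) (Y - D)).symm
  have hd1 : v0 * w0 + v1 * w1 = -(Real.cos (∠ B A C) * (nv * nw)) := by
    have := inner_angle B C
    rw [inner_coord B C, e1, Real.cos_pi_sub] at this
    rw [hv0, hv1, hw0, hw1]; rw [this]; ring
  have hd2 : w0 * u0 + w1 * u1 = -(Real.cos (∠ A B C) * (nw * nu)) := by
    have := inner_angle A C
    rw [inner_coord A C, e2, Real.cos_pi_sub] at this
    rw [hw0, hw1, hu0, hu1]; rw [show (C 0 - D 0) * (A 0 - D 0) + (C 1 - D 1) * (A 1 - D 1)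
      = (A 0 - D 0) * (C 0 - D 0) + (A 1 - D 1) * (C 1 - D 1) by ring, this]; ring
  have hd3 : u0 * v0 + u1 * v1 = -(Real.cos (∠ A C B) * (nu * nv)) := by
    have := inner_angle A B
    rw [inner_coord A B, e3, Real.cos_pi_sub] at this
    rw [hu0, hu1, hv0, hv1]; rw [this]; ring
  -- cross products
  set c1 : ℝ := v0 * w1 - v1 * w0 with hc1'
  set c2 : ℝ := w0 * u1 - w1 * u0 with hc2'
  set c3 : ℝ := u0 * v1 - u1 * v0 with hc3'
  have hsa : 0 < Real.sin (∠ B A C) := Real.sin_pos_of_pos_of_lt_pi hα.1 hα.2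
  have hsb : 0 < Real.sin (∠ A B C) := Real.sin_pos_of_pos_of_lt_pi hβ.1 hβ.2
  have hsc : 0 < Real.sin (∠ A C B) := Real.sin_pos_of_pos_of_lt_pi hγ.1 hγ.2
  have hc1 : c1 ^ 2 = (Real.sin (∠ B A C) * (nv * nw)) ^ 2 := by
    have hcr : c1 ^ 2 = (nv * nw) ^ 2 - (Real.cos (∠ B A C) * (nv * nw)) ^ 2 := by
      calc c1 ^ 2 = (v0 ^ 2 + v1 ^ 2) * (w0 ^ 2 + w1 ^ 2) - (v0 * w0 + v1 * w1) ^ 2 := by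
            rw [hc1']; ring
        _ = (nv * nw) ^ 2 - (Real.cos (∠ B A C) * (nv * nw)) ^ 2 := by
            rw [hnv, hnw, hd1]; ring
    linear_combination hcr - (nv * nw) ^ 2 * (Real.sin_sq_add_cos_sq (∠ B A C))
  have hc2 : c2 ^ 2 = (Real.sin (∠ A B C) * (nw * nu)) ^ 2 := by
    have hcr : c2 ^ 2 = (nw * nu) ^ 2 - (Real.cos (∠ A B C) * (nw * nu)) ^ 2 := by
      calc c2 ^ 2 = (w0 ^ 2 + w1 ^ 2) * (u0 ^ 2 + u1 ^ 2) - (w0 * u0 + w1 * u1) ^ 2 := by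
            rw [hc2']; ring
        _ = (nw * nu) ^ 2 - (Real.cos (∠ A B C) * (nw * nu)) ^ 2 := by
            rw [hnw, hnu, hd2]; ring
    linear_combination hcr - (nw * nu) ^ 2 * (Real.sin_sq_add_cos_sq (∠ A B C))
  have hc3 : c3 ^ 2 = (Real.sin (∠ A C B) * (nu * nv)) ^ 2 := by
    have hcr : c3 ^ 2 = (nu * nv) ^ 2 - (Real.cos (∠ A C B) * (nu * nv)) ^ 2 := by
      calc c3 ^ 2 = (u0 ^ 2 + u1 ^ 2) * (v0 ^ 2 + v1 ^ 2) - (u0 * v0 + u1 * v1) ^ 2 := by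
            rw [hc3']; ring
        _ = (nu * nv) ^ 2 - (Real.cos (∠ A C B) * (nu * nv)) ^ 2 := by
            rw [hnu, hnv, hd3]; ring
    linear_combination hcr - (nu * nv) ^ 2 * (Real.sin_sq_add_cos_sq (∠ A C B))
  -- trig identities for the angle sum
  have hccγ : Real.cos (∠ A C B)
      = Real.sin (∠ B A C) * Real.sin (∠ A B C) - Real.cos (∠ B A C) * Real.cos (∠ A B C) := by
    rw [show ∠ A C B = π - (∠ B A C + ∠ A B C) by linarith, Real.cos_pi_sub, Real.cos_add]
    ring
  have hscγ : Real.sin (∠ A C B)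
      = Real.sin (∠ B A C) * Real.cos (∠ A B C) + Real.cos (∠ B A C) * Real.sin (∠ A B C) := by
    rw [show ∠ A C B = π - (∠ B A C + ∠ A B C) by linarith, Real.sin_pi_sub, Real.sin_add]
  -- the key real-part identity
  have hre : (-(Real.cos (∠ B A C) * (nv * nw))) * (-(Real.cos (∠ A B C) * (nw * nu)))
        * (-(Real.cos (∠ A C B) * (nu * nv)))
      - (-(Real.cos (∠ B A C) * (nv * nw))) * c2 * c3
      - c1 * (-(Real.cos (∠ A B C) * (nw * nu))) * c3
      - c1 * c2 * (-(Real.cos (∠ A C B) * (nu * nv))) = (nu * nv * nw) ^ 2 := by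
    rw [← hd1, ← hd2, ← hd3, hc1', hc2', hc3']
    linear_combination ((v0 ^ 2 + v1 ^ 2) * (w0 ^ 2 + w1 ^ 2)) * hnu
      + (nu ^ 2 * (w0 ^ 2 + w1 ^ 2)) * hnv + (nu ^ 2 * nv ^ 2) * hnw
  have := same_sign (Real.sin (∠ B A C)) (Real.sin (∠ A B C)) (Real.sin (∠ A C B))
      (Real.cos (∠ B A C)) (Real.cos (∠ A B C)) (Real.cos (∠ A C B)) nu nv nw c1 c2 c3
      hnup hnvp hnwp hsa hsb hsc (Real.sin_sq_add_cos_sq _) (Real.sin_sq_add_cos_sq _)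
      hccγ hscγ hc1 hc2 hc3 hre
  rcases this with ⟨k1, k2, k3⟩ | ⟨k1, k2, k3⟩
  · simp only [hc1', hv0, hv1, hw0, hw1] at k1
    simp only [hc2', hw0, hw1, hu0, hu1] at k2
    simp only [hc3', hu0, hu1, hv0, hv1] at k3
    exact interior_aux A B C D (by linarith) (by linarith) (by linarith)
  · simp only [hc1', hv0, hv1, hw0, hw1] at k1
    simp only [hc2', hw0, hw1, hu0, hu1] at k2
    simp only [hc3', hu0, hu1, hv0, hv1] at k3
    have : D ∈ interior (convexHull ℝ ({B, A, C} : Set (EuclideanSpace ℝ (Fin 2)))) := by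
      apply interior_aux B A C D
      · linarith [k2]
      · linarith [k1]
      · linarith [k3]
    rwa [Set.insert_comm] at this
end

section
/- Let ABC be a nondegenerate triangle and D a point strictly inside its circumcircle with D ∉ {A,B,C}. Then ∠ADC > ∠ABC and ∠ADB > ∠ACB, provided ∠ABC < π/2 and ∠ACB < π/2. -/
open EuclideanGeometry Real

private lemma core_abstract (E I J SB SD AC2 M : ℝ)
    (id1 : E * SB^2 = AC2 * J^2) (id2 : E * SD^2 = AC2 * M^2)
    (hMI : I < M) (hJ : 0 < J) (hI : 0 ≤ I) (hAC : 0 < AC2) :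
    I^2 * (SB^2 + J^2) < J^2 * (SD^2 + I^2) := by
  have hE : 0 < E := by
    have h5 : 0 < E * SB^2 := by rw [id1]; exact mul_pos hAC (pow_pos hJ 2)
    rcases mul_pos_iff.mp h5 with ⟨h6, _⟩ | ⟨_, h7⟩
    · exact h6
    · exact absurd h7 (not_lt.mpr (sq_nonneg SB))
  have hM2 : I^2 < M^2 := by
    have h6 := mul_self_lt_mul_self hI hMI
    simpa [sq] using h6
  have h3 : I^2 * (AC2 * J^2) < J^2 * (AC2 * M^2) := by
    calc I^2 * (AC2 * J^2) = (AC2 * J^2) * I^2 := by ring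
      _ < (AC2 * J^2) * M^2 := mul_lt_mul_of_pos_left hM2 (mul_pos hAC (pow_pos hJ 2))
      _ = J^2 * (AC2 * M^2) := by ring
  have h4 : E * (I^2 * SB^2) < E * (J^2 * SD^2) := by
    calc E * (I^2 * SB^2) = I^2 * (E * SB^2) := by ring
    _ = I^2 * (AC2 * J^2) := by rw [id1]
    _ < J^2 * (AC2 * M^2) := h3
    _ = J^2 * (E * SD^2) := by rw [id2]
    _ = E * (J^2 * SD^2) := by ring
  have hkey : I^2 * SB^2 < J^2 * SD^2 := lt_of_mul_lt_mul_left h4 hE.le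
  have e1 : I^2 * (SB^2 + J^2) = I^2 * SB^2 + I^2 * J^2 := by ring
  have e2 : J^2 * (SD^2 + I^2) = J^2 * SD^2 + I^2 * J^2 := by ring
  rw [e1, e2]
  linarith [hkey]

set_option maxHeartbeats 1000000 in
private lemma core_poly (a1 a2 b1 b2 c1 c2 d1 d2 r : ℝ)
    (ha : a1^2 + a2^2 = r^2) (hb : b1^2 + b2^2 = r^2) (hc : c1^2 + c2^2 = r^2)
    (hd : d1^2 + d2^2 < r^2)
    (hJ : 0 < (a1-b1)*(c1-b1) + (a2-b2)*(c2-b2))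
    (hI : 0 ≤ (a1-d1)*(c1-d1) + (a2-d2)*(c2-d2))
    (hAC : 0 < (a1-c1)^2 + (a2-c2)^2) :
    ((a1-d1)*(c1-d1) + (a2-d2)*(c2-d2))^2 * (((a1-b1)^2+(a2-b2)^2) * ((c1-b1)^2+(c2-b2)^2))
      < ((a1-b1)*(c1-b1) + (a2-b2)*(c2-b2))^2 * (((a1-d1)^2+(a2-d2)^2) * ((c1-d1)^2+(c2-d2)^2)) := by
  have id1 : (4*r^2 - ((a1-c1)^2 + (a2-c2)^2)) * ((a1-b1)*(c2-b2) - (a2-b2)*(c1-b1))^2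
      = ((a1-c1)^2 + (a2-c2)^2) * ((a1-b1)*(c1-b1) + (a2-b2)*(c2-b2))^2 := by
    linear_combination (-c2^2*r^2 - c2^4 + 3*c1^2*r^2 - 2*c1^2*c2^2 - c1^4 + 2*b2*c2*r^2 - 2*b2*c2^3 - 2*b2*c1^2*c2 - b2^2*r^2 + 6*b2^2*c2^2 - 2*b2^2*c1^2 - 2*b2^3*c2 - b2^4 - 6*b1*c1*r^2 + 2*b1*c1*c2^2 + 2*b1*c1^3 + 8*b1*b2*c1*c2 + 2*b1*b2^2*c1 + 3*b1^2*r^2 - 2*b1^2*c2^2 - 2*b1^2*c1^2 - 2*b1^2*b2*c2 - 2*b1^2*b2^2 + 2*b1^3*c1 - b1^4 + 2*a2*c2^3 + 2*a2*c1^2*c2 - 2*a2*b2*c2^2 + 2*a2*b2*c1^2 - 2*a2*b2^2*c2 + 2*a2*b2^3 - 4*a2*b1*c1*c2 - 4*a2*b1*b2*c1 + 2*a2*b1^2*c2 + 2*a2*b1^2*b2 - a2^2*c2^2 - a2^2*c1^2 + 2*a2^2*b2*c2 - a2^2*b2^2 + 2*a2^2*b1*c1 - a2^2*b1^2 + 2*a1*c1*c2^2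 + 2*a1*c1^3 - 4*a1*b2*c1*c2 + 2*a1*b2^2*c1 + 2*a1*b1*c2^2 - 2*a1*b1*c1^2 - 4*a1*b1*b2*c2 + 2*a1*b1*b2^2 - 2*a1*b1^2*c1 + 2*a1*b1^3 - a1^2*c2^2 - a1^2*c1^2 + 2*a1^2*b2*c2 - a1^2*b2^2 + 2*a1^2*b1*c1 - a1^2*b1^2) * ha + (-2*r^4 + 5*c2^2*r^2 - c2^4 + c1^2*r^2 - 2*c1^2*c2^2 - c1^4 - 2*b2*c2*r^2 + 2*b2*c2^3 + 2*b2*c1^2*c2 - b2^2*r^2 - b2^2*c2^2 - b2^2*c1^2 + 2*b1*c1*r^2 + 2*b1*c1*c2^2 + 2*b1*c1^3 - b1^2*r^2 - b1^2*c2^2 - b1^2*c1^2 - 2*a2*c2^3 - 2*a2*c1^2*c2 + 2*a2*b2*r^2 - 2*a2*b2*c2^2 + 2*a2*b2*c1^2 + 2*a2*b2^2*c2 - 4*a2*b1*c1*c2 + 2*a2*b1^2*c2 - 4*a1*c1*r^2 + 2*a1*c1*c2^2 + 2*a1*c1^3 - 4*a1*b2*c1*c2 + 2*a1*b2^2*c1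 + 2*a1*b1*r^2 + 2*a1*b1*c2^2 - 2*a1*b1*c1^2 + 2*a1*b1^2*c1 + 8*a1*a2*c1*c2 - 4*a1*a2*b2*c1 - 4*a1*a2*b1*c2 + 4*a1^2*r^2 - 8*a1^2*c2^2 + 4*a1^2*b2*c2 - 4*a1^2*b1*c1) * hb + (2*r^4 - 2*c2^2*r^2 - 2*c1^2*r^2 + 4*b1*c1*r^2 - 4*b1^2*r^2 - 2*a2*b2*r^2 + 2*a2*b2*c2^2 + 2*a2*b2*c1^2 - 4*a2*b1*b2*c1 + 4*a2*b1^2*c2 + 4*a1*c1*r^2 - 2*a1*b1*r^2 + 2*a1*b1*c2^2 + 2*a1*b1*c1^2 - 4*a1*b1*b2*c2 - 4*a1*b1^2*c1 - 4*a1*a2*b2*c1 - 4*a1*a2*b1*c2 + 8*a1*a2*b1*b2 - 4*a1^2*r^2 + 4*a1^2*b2*c2 - 4*a1^2*b1*c1 + 8*a1^2*b1^2) * hc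
  have id2 : (4*r^2 - ((a1-c1)^2 + (a2-c2)^2)) * ((a1-d1)*(c2-d2) - (a2-d2)*(c1-d1))^2
      = ((a1-c1)^2 + (a2-c2)^2) * (r^2 + (a1*c1 + a2*c2) - ((a1+c1)*d1 + (a2+c2)*d2))^2 := by
    linear_combination (-r^4 - d2^2*r^2 + 3*d1^2*r^2 + 3*c2^2*r^2 + 2*c2^2*d2^2 - 6*c2^2*d1^2 - 2*c2^3*d2 - c2^4 - 4*c1*d1*r^2 + 8*c1*c2*d1*d2 + 2*c1*c2^2*d1 + 3*c1^2*r^2 - 2*c1^2*d2^2 - 2*c1^2*d1^2 - 2*c1^2*c2*d2 - 2*c1^2*c2^2 + 2*c1^3*d1 - c1^4 + 2*a2*d2*r^2 - 2*a2*c2*r^2 + 4*a2*c2*d1^2 - 2*a2*c2^2*d2 + 2*a2*c2^3 - 4*a2*c1*d1*d2 - 4*a2*c1*c2*d1 + 2*a2*c1^2*d2 + 2*a2*c1^2*c2 - a2^2*d2^2 - a2^2*d1^2 + 2*a2^2*c2*d2 - a2^2*c2^2 + 2*a2^2*c1*d1 - a2^2*c1^2 + 2*a1*d1*r^2 - 4*a1*c2*d1*d2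 + 2*a1*c2^2*d1 - 2*a1*c1*r^2 + 4*a1*c1*d2^2 - 4*a1*c1*c2*d2 + 2*a1*c1*c2^2 - 2*a1*c1^2*d1 + 2*a1*c1^3 - a1^2*d2^2 - a1^2*d1^2 + 2*a1^2*c2*d2 - a1^2*c2^2 + 2*a1^2*c1*d1 - a1^2*c1^2) * ha + (r^4 + d2^2*r^2 - 3*d1^2*r^2 - c2^2*r^2 - c2^2*d2^2 - c2^2*d1^2 + 4*c1*d1*r^2 - c1^2*r^2 - c1^2*d2^2 - c1^2*d1^2 - 2*a2*d2*r^2 + 4*a2*c2*d1^2 + 2*a2*c2^2*d2 - 4*a2*c1*d1*d2 + 2*a2*c1^2*d2 - 2*a1*d1*r^2 - 4*a1*c2*d1*d2 + 2*a1*c2^2*d1 + 4*a1*c1*d2^2 + 2*a1*c1^2*d1 + 8*a1*a2*d1*d2 - 4*a1*a2*c2*d1 - 4*a1*a2*c1*d2 - 4*a1^2*d2^2 + 4*a1^2*d1^2 + 4*a1^2*c2*d2 - 4*a1^2*c1*d1) * hc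
  have hMI : (a1-d1)*(c1-d1) + (a2-d2)*(c2-d2)
      < r^2 + (a1*c1 + a2*c2) - ((a1+c1)*d1 + (a2+c2)*d2) := by
    have h : (r^2 + (a1*c1 + a2*c2) - ((a1+c1)*d1 + (a2+c2)*d2))
        - ((a1-d1)*(c1-d1) + (a2-d2)*(c2-d2)) = r^2 - (d1^2 + d2^2) := by ring
    linarith [h, hd]
  have habs := core_abstract (4*r^2 - ((a1-c1)^2 + (a2-c2)^2))
    ((a1-d1)*(c1-d1) + (a2-d2)*(c2-d2)) ((a1-b1)*(c1-b1) + (a2-b2)*(c2-b2))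
    ((a1-b1)*(c2-b2) - (a2-b2)*(c1-b1)) ((a1-d1)*(c2-d2) - (a2-d2)*(c1-d1))
    ((a1-c1)^2 + (a2-c2)^2) (r^2 + (a1*c1 + a2*c2) - ((a1+c1)*d1 + (a2+c2)*d2))
    id1 id2 hMI hJ hI hAC
  calc ((a1-d1)*(c1-d1) + (a2-d2)*(c2-d2))^2 * (((a1-b1)^2+(a2-b2)^2) * ((c1-b1)^2+(c2-b2)^2))
      = ((a1-d1)*(c1-d1) + (a2-d2)*(c2-d2))^2
        * (((a1-b1)*(c2-b2) - (a2-b2)*(c1-b1))^2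
          + ((a1-b1)*(c1-b1) + (a2-b2)*(c2-b2))^2) := by ring
    _ < ((a1-b1)*(c1-b1) + (a2-b2)*(c2-b2))^2
        * (((a1-d1)*(c2-d2) - (a2-d2)*(c1-d1))^2
          + ((a1-d1)*(c1-d1) + (a2-d2)*(c2-d2))^2) := habs
    _ = ((a1-b1)*(c1-b1) + (a2-b2)*(c2-b2))^2
        * (((a1-d1)^2+(a2-d2)^2) * ((c1-d1)^2+(c2-d2)^2)) := by ring

private lemma norm2 (x : EuclideanSpace ℝ (Fin 2)) : ‖x‖^2 = x 0 ^ 2 + x 1 ^ 2 := by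
  rw [← real_inner_self_eq_norm_sq]
  simp only [PiLp.inner_apply, Fin.sum_univ_two, RCLike.inner_apply, conj_trivial]
  ring

private lemma inner2 (x y : EuclideanSpace ℝ (Fin 2)) :
    (inner ℝ x y : ℝ) = x 0 * y 0 + x 1 * y 1 := by
  simp [PiLp.inner_apply, Fin.sum_univ_two, RCLike.inner_apply]
  ring

private lemma cos3 (A B C : EuclideanSpace ℝ (Fin 2)) :
    Real.cos (∠ A B C) = inner ℝ (A - B) (C - B) / (dist A B * dist C B) := by
  rw [EuclideanGeometry.angle, InnerProductGeometry.cos_angle, dist_eq_norm, dist_eq_norm]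
  simp [vsub_eq_sub]

private lemma key (A B C D O : EuclideanSpace ℝ (Fin 2)) (r : ℝ)
    (hnAC : A ≠ C) (hnAB : A ≠ B) (hnCB : C ≠ B)
    (hA : dist O A = r) (hB : dist O B = r) (hC : dist O C = r)
    (hD : dist O D < r) (hDA : D ≠ A) (hDC : D ≠ C)
    (hB2 : ∠ A B C < π / 2) : ∠ A B C < ∠ A D C := by
  have hdAB : 0 < dist A B := dist_pos.2 hnAB
  have hdCB : 0 < dist C B := dist_pos.2 hnCB
  have hdAD : 0 < dist A D := by rw [dist_comm]; exact dist_pos.2 hDA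
  have hdCD : 0 < dist C D := by rw [dist_comm]; exact dist_pos.2 hDC
  have hcosB : 0 < Real.cos (∠ A B C) :=
    Real.cos_pos_of_mem_Ioo ⟨by linarith [EuclideanGeometry.angle_nonneg A B C, Real.pi_pos], hB2⟩
  have hJ : (0:ℝ) < inner ℝ (A - B) (C - B) := by
    have h : (inner ℝ (A - B) (C - B) : ℝ) = Real.cos (∠ A B C) * (dist A B * dist C B) := by
      rw [cos3]; field_simp
    rw [h]; positivity
  suffices hcos : Real.cos (∠ A D C) < Real.cos (∠ A B C) by
    by_contra h
    push_neg at h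
    have := Real.cos_le_cos_of_nonneg_of_le_pi (EuclideanGeometry.angle_nonneg A D C)
      (EuclideanGeometry.angle_le_pi A B C) h
    linarith
  rw [cos3 A D C, cos3 A B C]
  rcases lt_or_ge ((inner ℝ (A - D) (C - D) : ℝ)) 0 with hIneg | hI
  · calc (inner ℝ (A - D) (C - D) : ℝ) / (dist A D * dist C D)
        < 0 := div_neg_of_neg_of_pos hIneg (by positivity)
      _ < (inner ℝ (A - B) (C - B) : ℝ) / (dist A B * dist C B) := div_pos hJ (by positivity)
  · rw [div_lt_div_iff₀ (by positivity) (by positivity)]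
    apply lt_of_pow_lt_pow_left₀ 2 (by positivity)
    have ha' : (A 0 - O 0)^2 + (A 1 - O 1)^2 = r^2 := by
      have h : dist O A ^ 2 = r ^ 2 := by rw [hA]
      rw [dist_eq_norm, norm2] at h
      simp only [PiLp.sub_apply] at h
      linear_combination h
    have hb' : (B 0 - O 0)^2 + (B 1 - O 1)^2 = r^2 := by
      have h : dist O B ^ 2 = r ^ 2 := by rw [hB]
      rw [dist_eq_norm, norm2] at h
      simp only [PiLp.sub_apply] at h
      linear_combination h
    have hc' : (C 0 - O 0)^2 + (C 1 - O 1)^2 = r^2 := by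
      have h : dist O C ^ 2 = r ^ 2 := by rw [hC]
      rw [dist_eq_norm, norm2] at h
      simp only [PiLp.sub_apply] at h
      linear_combination h
    have hd' : (D 0 - O 0)^2 + (D 1 - O 1)^2 < r^2 := by
      have h : dist O D ^ 2 < r ^ 2 := by
        apply pow_lt_pow_left₀ hD dist_nonneg
        norm_num
      rw [dist_eq_norm, norm2] at h
      simp only [PiLp.sub_apply] at h
      have e : (D 0 - O 0)^2 + (D 1 - O 1)^2 = (O 0 - D 0)^2 + (O 1 - D 1)^2 := by ring
      linarith [h, e]
    have eI : (inner ℝ (A - D) (C - D) : ℝ)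
        = ((A 0 - O 0) - (D 0 - O 0)) * ((C 0 - O 0) - (D 0 - O 0))
          + ((A 1 - O 1) - (D 1 - O 1)) * ((C 1 - O 1) - (D 1 - O 1)) := by
      rw [inner2]; simp only [PiLp.sub_apply]; ring
    have eJ : (inner ℝ (A - B) (C - B) : ℝ)
        = ((A 0 - O 0) - (B 0 - O 0)) * ((C 0 - O 0) - (B 0 - O 0))
          + ((A 1 - O 1) - (B 1 - O 1)) * ((C 1 - O 1) - (B 1 - O 1)) := by
      rw [inner2]; simp only [PiLp.sub_apply]; ring
    have dAB2 : dist A B ^ 2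
        = ((A 0 - O 0) - (B 0 - O 0))^2 + ((A 1 - O 1) - (B 1 - O 1))^2 := by
      rw [dist_eq_norm, norm2]; simp only [PiLp.sub_apply]; ring
    have dCB2 : dist C B ^ 2
        = ((C 0 - O 0) - (B 0 - O 0))^2 + ((C 1 - O 1) - (B 1 - O 1))^2 := by
      rw [dist_eq_norm, norm2]; simp only [PiLp.sub_apply]; ring
    have dAD2 : dist A D ^ 2
        = ((A 0 - O 0) - (D 0 - O 0))^2 + ((A 1 - O 1) - (D 1 - O 1))^2 := by
      rw [dist_eq_norm, norm2]; simp only [PiLp.sub_apply]; ring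
    have dCD2 : dist C D ^ 2
        = ((C 0 - O 0) - (D 0 - O 0))^2 + ((C 1 - O 1) - (D 1 - O 1))^2 := by
      rw [dist_eq_norm, norm2]; simp only [PiLp.sub_apply]; ring
    have hAC' : (0:ℝ) < ((A 0 - O 0) - (C 0 - O 0))^2 + ((A 1 - O 1) - (C 1 - O 1))^2 := by
      have h : dist A C ^ 2 = ((A 0 - O 0) - (C 0 - O 0))^2 + ((A 1 - O 1) - (C 1 - O 1))^2 := by
        rw [dist_eq_norm, norm2]; simp only [PiLp.sub_apply]; ring
      rw [← h]
      have := dist_pos.2 hnAC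
      positivity
    have hcore := core_poly (A 0 - O 0) (A 1 - O 1) (B 0 - O 0) (B 1 - O 1)
      (C 0 - O 0) (C 1 - O 1) (D 0 - O 0) (D 1 - O 1) r ha' hb' hc' hd'
      (by rw [← eJ]; exact hJ) (by rw [← eI]; exact hI) hAC'
    rw [← eI, ← eJ, ← dAB2, ← dCB2, ← dAD2, ← dCD2] at hcore
    calc ((inner ℝ (A - D) (C - D) : ℝ) * (dist A B * dist C B)) ^ 2
        = (inner ℝ (A - D) (C - D) : ℝ)^2 * (dist A B ^ 2 * dist C B ^ 2) := by ring
      _ < (inner ℝ (A - B) (C - B) : ℝ)^2 * (dist A D ^ 2 * dist C D ^ 2) := hcore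
      _ = ((inner ℝ (A - B) (C - B) : ℝ) * (dist A D * dist C D)) ^ 2 := by ring

theorem angles_grow_inside_circumcircle (A B C D O : EuclideanSpace ℝ (Fin 2)) (r : ℝ)
    (hABC : ¬ Collinear ℝ ({A, B, C} : Set (EuclideanSpace ℝ (Fin 2))))
    (hA : dist O A = r) (hB : dist O B = r) (hC : dist O C = r)
    (hD : dist O D < r)
    (hDA : D ≠ A) (hDB : D ≠ B) (hDC : D ≠ C)
    (hB2 : ∠ A B C < π / 2) (hC2 : ∠ A C B < π / 2) :
    ∠ A B C < ∠ A D C ∧ ∠ A C B < ∠ A D B := by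
  have h12 : A ≠ B := ne₁₂_of_not_collinear hABC
  have h13 : A ≠ C := ne₁₃_of_not_collinear hABC
  have h23 : B ≠ C := ne₂₃_of_not_collinear hABC
  exact ⟨key A B C D O r h13 h12 h23.symm hA hB hC hD hDA hDC hB2,
    key A C B D O r h12 h13 h23 hA hC hB hD hDA hDB hC2⟩
end

section
/- For the right-angled base with ∠BAC = π/2, ∠ABC = ∠ACB = π/4 (side lengths d₁ = 2, d₂ = d₃ = √2) and target point (a₁,a₂,a₃) = (−1/2, 1/2, 1/2), the Grunert system s₁² − 2a₃s₁s₂ + s₂² = d₃², s₁² − 2a₂s₁s₃ + s₃² = d₂², s₂² − 2a₁s₂s₃ + s₃² = d₁² has exactly one solution in positive reals, namely (s₁, s₂, s₃) = (1 + √3/3, 2√3/3, 2√3/3). -/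
theorem grunert_right_V3_one_solution :
    {s : ℝ × ℝ × ℝ | 0 < s.1 ∧ 0 < s.2.1 ∧ 0 < s.2.2 ∧
      s.1 ^ 2 - 2 * (1 / 2 : ℝ) * s.1 * s.2.1 + s.2.1 ^ 2 = Real.sqrt 2 ^ 2 ∧
      s.1 ^ 2 - 2 * (1 / 2 : ℝ) * s.1 * s.2.2 + s.2.2 ^ 2 = Real.sqrt 2 ^ 2 ∧
      s.2.1 ^ 2 - 2 * (-(1 / 2) : ℝ) * s.2.1 * s.2.2 + s.2.2 ^ 2 = 2 ^ 2} =
    {(1 + Real.sqrt 3 / 3, 2 * Real.sqrt 3 / 3, 2 * Real.sqrt 3 / 3)} := by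
  have h2 : Real.sqrt 2 ^ 2 = 2 := Real.sq_sqrt (by norm_num)
  have h3 : Real.sqrt 3 ^ 2 = 3 := Real.sq_sqrt (by norm_num)
  have h3pos : 0 < Real.sqrt 3 := Real.sqrt_pos.mpr (by norm_num)
  have h3lt : Real.sqrt 3 < 3 := by nlinarith
  ext ⟨s1, s2, s3⟩
  simp only [Set.mem_setOf_eq, Set.mem_singleton_iff, Prod.mk.injEq]
  constructor
  · rintro ⟨hp1, hp2, hp3, e1, e2, e3⟩
    rw [h2] at e1 e2
    norm_num at e1 e2 e3
    have key : (s2 - s3) * (s2 + s3 - s1) = 0 := by nlinarith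
    rcases mul_eq_zero.mp key with h | h
    · have hs23 : s2 = s3 := by linarith
      subst hs23
      have hs2 : s2 = 2 * Real.sqrt 3 / 3 := by
        have hz : (s2 - 2 * Real.sqrt 3 / 3) * (s2 + 2 * Real.sqrt 3 / 3) = 0 := by
          nlinarith
        rcases mul_eq_zero.mp hz with h' | h'
        · linarith
        · nlinarith
      have hs1 : s1 = 1 + Real.sqrt 3 / 3 := by
        have hz : (s1 - (1 + Real.sqrt 3 / 3)) * (s1 - (Real.sqrt 3 / 3 - 1)) = 0 := by
          rw [hs2] at e1; nlinarith
        rcases mul_eq_zero.mp hz with h' | h'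
        · linarith
        · nlinarith
      exact ⟨hs1, hs2, hs2⟩
    · exfalso
      have hs1 : s1 = s2 + s3 := by linarith
      rw [hs1] at e1
      nlinarith
  · rintro ⟨h1, hh2, hh3⟩
    subst h1; subst hh2; subst hh3
    refine ⟨by nlinarith, by positivity, by positivity, ?_, ?_, ?_⟩ <;>
      nlinarith [h2]
end
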